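/- Define a projection P ∈ ℝ^{m×m} (P² = P = Pᵀ) to be left SF(ε,k) for A if ‖(I−P)A‖₂² ≤ (ε/k)‖A − A_k‖_F², and Q ∈ ℝ^{n×n} to be right SF(ε,k) for A if ‖A(I−Q)‖₂² ≤ (ε/k)‖A − A_k‖_F². If P is left SF(ε,k) and Q is right SF(ε,k) for A, then ‖A − P A_k Q‖_F² ≤ (1+4ε)‖A − A_k‖_F². -/

import Mathlib

/-!
Put `E = A - Ak`, `U = Uk Ukᵀ`, `V = Vk Vkᵀ` and `G = Ak (I - Q)`, so that
`A - P Ak Q = (I - P) A + P (E + G)`. Splitting the Frobenius norm along `P` and then along `V`,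
`‖A - P Ak Q‖² = ‖(I - P) Ak‖² + ‖E‖² + 2⟨PE, PG⟩ + ‖PG‖²`.
Since `U E = 0` and `U G = G`, the cross term equals `-⟨U (I - P) E, G⟩`. Each of
`(I - P) Ak = (I - P) A · V`, `U (I - P) E` and `G = U · A (I - Q)` is a rank-`k` orthogonal
projection (Frobenius norm `√k`) times a matrix of small spectral norm, so its squared Frobenius
norm is at most `k ‖(I - P) A‖₂²` or `k ‖A (I - Q)‖₂²`, hence at most `ε ‖E‖²`.
-/

open Matrix BigOperators

/-- Frobenius norm of a real matrix. -/
noncomputable def frob {m n : ℕ} (A : Matrix (Fin m) (Fin n) ℝ) : ℝ :=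
  Real.sqrt (∑ i, ∑ j, (A i j) ^ 2)

/-- Spectral (operator ℓ2→ℓ2) norm of a real matrix. -/
noncomputable def spec {m n : ℕ} (A : Matrix (Fin m) (Fin n) ℝ) : ℝ :=
  ‖LinearMap.toContinuousLinearMap (Matrix.toEuclideanLin A)‖

/-- `B` is the Moore–Penrose pseudoinverse of `A` (four Penrose conditions). -/
def IsMPInv {m n : ℕ} (A : Matrix (Fin m) (Fin n) ℝ) (B : Matrix (Fin n) (Fin m) ℝ) : Prop :=
  A * B * A = A ∧ B * A * B = B ∧ (A * B)ᵀ = A * B ∧ (B * A)ᵀ = B * A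

variable {l m n : ℕ}

lemma frob_nonneg (M : Matrix (Fin m) (Fin n) ℝ) : 0 ≤ frob M := Real.sqrt_nonneg _

lemma frob_sq (M : Matrix (Fin m) (Fin n) ℝ) : frob M ^ 2 = ∑ i, ∑ j, M i j ^ 2 :=
  Real.sq_sqrt (by positivity)

lemma frob_sq_eq_trace (M : Matrix (Fin m) (Fin n) ℝ) : frob M ^ 2 = (Mᵀ * M).trace := by
  rw [frob_sq]
  simp only [trace, diag, mul_apply, transpose_apply, sq]
  exact Finset.sum_comm

lemma frob_transpose (M : Matrix (Fin m) (Fin n) ℝ) : frob Mᵀ = frob M := by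
  simp only [frob, transpose_apply]
  rw [Finset.sum_comm]

lemma frob_neg (M : Matrix (Fin m) (Fin n) ℝ) : frob (-M) = frob M := by
  simp only [frob, Matrix.neg_apply, neg_sq]

lemma frob_add_sq (M N : Matrix (Fin m) (Fin n) ℝ) :
    frob (M + N) ^ 2 = frob M ^ 2 + 2 * (Mᵀ * N).trace + frob N ^ 2 := by
  rw [frob_sq_eq_trace, frob_sq_eq_trace, frob_sq_eq_trace, transpose_add, Matrix.add_mul,
    Matrix.mul_add, Matrix.mul_add, trace_add, trace_add, trace_add, ← trace_transpose (Nᵀ * M),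
    transpose_mul, transpose_transpose]
  ring

lemma trace_transpose_mul_le (M N : Matrix (Fin m) (Fin n) ℝ) :
    (Mᵀ * N).trace ≤ frob M * frob N := by
  have h := Real.sum_mul_le_sqrt_mul_sqrt (Finset.univ : Finset (Fin m × Fin n))
    (fun p => M p.1 p.2) (fun p => N p.1 p.2)
  simp only [← Finset.univ_product_univ, Finset.sum_product] at h
  simp only [frob, trace, diag, mul_apply, transpose_apply]
  rw [Finset.sum_comm]
  exact h

open scoped Matrix.Norms.L2Operator in
lemma spec_eq_l2_opNorm (M : Matrix (Fin m) (Fin n) ℝ) : spec M = ‖M‖ := rfl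

lemma spec_nonneg (M : Matrix (Fin m) (Fin n) ℝ) : 0 ≤ spec M := norm_nonneg _

lemma spec_transpose (M : Matrix (Fin m) (Fin n) ℝ) : spec Mᵀ = spec M := by
  simpa [spec_eq_l2_opNorm] using l2_opNorm_conjTranspose M

lemma sum_sq_mulVec_le (M : Matrix (Fin m) (Fin n) ℝ) (x : Fin n → ℝ) :
    ∑ i, (M *ᵥ x) i ^ 2 ≤ spec M ^ 2 * ∑ j, x j ^ 2 := by
  have h := (LinearMap.toContinuousLinearMap (toEuclideanLin M)).le_opNorm (WithLp.toLp 2 x)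
  have h2 := pow_le_pow_left₀ (norm_nonneg _) h 2
  rwa [mul_pow, EuclideanSpace.real_norm_sq_eq, EuclideanSpace.real_norm_sq_eq] at h2

lemma frob_mul_le_spec_mul_frob (M : Matrix (Fin l) (Fin m) ℝ) (N : Matrix (Fin m) (Fin n) ℝ) :
    frob (M * N) ≤ spec M * frob N := by
  refine pow_le_pow_iff_left₀ (frob_nonneg _) (mul_nonneg (spec_nonneg _) (frob_nonneg _))
    two_ne_zero |>.mp ?_
  rw [mul_pow, frob_sq, frob_sq, Finset.sum_comm, Finset.sum_comm (γ := Fin m), Finset.mul_sum]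
  exact Finset.sum_le_sum fun j _ => sum_sq_mulVec_le M (fun i => N i j)

lemma frob_mul_le_frob_mul_spec (M : Matrix (Fin l) (Fin m) ℝ) (N : Matrix (Fin m) (Fin n) ℝ) :
    frob (M * N) ≤ frob M * spec N := by
  rw [← frob_transpose, transpose_mul, ← frob_transpose M, ← spec_transpose N, mul_comm]
  exact frob_mul_le_spec_mul_frob _ _

section Projection

variable {P : Matrix (Fin m) (Fin m) ℝ}

lemma frob_sq_proj_mul_add_compl (hP : IsIdempotentElem P) (hPt : P.IsSymm)
    (M : Matrix (Fin m) (Fin n) ℝ) :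
    frob M ^ 2 = frob (P * M) ^ 2 + frob ((1 - P) * M) ^ 2 := by
  have hPc : (1 - P)ᵀ * (1 - P) = 1 - P := by
    rw [transpose_sub, transpose_one, hPt.eq, sub_mul, mul_sub, mul_sub, hP.eq]
    simp
  rw [frob_sq_eq_trace, frob_sq_eq_trace, frob_sq_eq_trace, transpose_mul, transpose_mul,
    Matrix.mul_assoc, ← Matrix.mul_assoc Pᵀ, hPt.eq, hP.eq, Matrix.mul_assoc,
    ← Matrix.mul_assoc (1 - P)ᵀ, hPc, ← trace_add, ← Matrix.mul_add, Matrix.sub_mul,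
    Matrix.one_mul, add_sub_cancel]

lemma frob_sq_mul_proj_add_compl (hP : IsIdempotentElem P) (hPt : P.IsSymm)
    (M : Matrix (Fin n) (Fin m) ℝ) :
    frob M ^ 2 = frob (M * P) ^ 2 + frob (M * (1 - P)) ^ 2 := by
  rw [← frob_transpose, frob_sq_proj_mul_add_compl hP hPt, ← frob_transpose (M * P),
    ← frob_transpose (M * (1 - P)), transpose_mul, transpose_mul, hPt.eq, transpose_sub,
    transpose_one, hPt.eq]

lemma frob_proj_mul_le (hP : IsIdempotentElem P) (hPt : P.IsSymm)
    (M : Matrix (Fin m) (Fin n) ℝ) : frob (P * M) ≤ frob M := by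
  refine pow_le_pow_iff_left₀ (frob_nonneg _) (frob_nonneg _) two_ne_zero |>.mp ?_
  rw [frob_sq_proj_mul_add_compl hP hPt M]
  exact le_add_of_nonneg_right (sq_nonneg _)

lemma frob_mul_one_sub_proj_le (hP : IsIdempotentElem P) (hPt : P.IsSymm)
    (M : Matrix (Fin n) (Fin m) ℝ) : frob (M * (1 - P)) ≤ frob M := by
  refine pow_le_pow_iff_left₀ (frob_nonneg _) (frob_nonneg _) two_ne_zero |>.mp ?_
  rw [frob_sq_mul_proj_add_compl hP hPt M]
  exact le_add_of_nonneg_left (sq_nonneg _)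

lemma trace_transpose_proj_mul_mul_le (hP : IsIdempotentElem P) (hPt : P.IsSymm)
    {U : Matrix (Fin m) (Fin m) ℝ} (hUt : U.IsSymm) {E G : Matrix (Fin m) (Fin n) ℝ}
    (hUE : U * E = 0) (hUG : U * G = G) :
    ((P * E)ᵀ * (P * G)).trace ≤ frob (U * ((1 - P) * E)) * frob G := by
  have hEG : Eᵀ * G = 0 := by
    rw [← hUG, ← Matrix.mul_assoc, ← hUt.eq, ← transpose_mul, hUE, transpose_zero, Matrix.zero_mul]
  have hcross : (P * E)ᵀ * (P * G) = (-(U * ((1 - P) * E)))ᵀ * G := by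
    simp only [transpose_neg, transpose_mul, hUt.eq, Matrix.neg_mul, Matrix.mul_assoc]
    rw [hUG, hPt.eq, ← Matrix.mul_assoc P P G, hP.eq, transpose_sub 1 P, transpose_one, hPt.eq,
      Matrix.sub_mul, Matrix.one_mul, Matrix.mul_sub, hEG, zero_sub, neg_neg]
  rw [hcross, ← frob_neg (U * ((1 - P) * E))]
  exact trace_transpose_mul_le _ _

end Projection

section Orthonormal

variable {r : ℕ} {W : Matrix (Fin m) (Fin r) ℝ}

lemma isIdempotentElem_mul_transpose (hW : Wᵀ * W = 1) : IsIdempotentElem (W * Wᵀ) := by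
  rw [IsIdempotentElem, Matrix.mul_assoc, ← Matrix.mul_assoc Wᵀ, hW, Matrix.one_mul]

lemma isSymm_mul_transpose (W : Matrix (Fin m) (Fin r) ℝ) : (W * Wᵀ).IsSymm := by
  rw [IsSymm, transpose_mul, transpose_transpose]

lemma frob_sq_mul_transpose_of_orthonormal (hW : Wᵀ * W = 1) : frob (W * Wᵀ) ^ 2 = r := by
  rw [frob_sq_eq_trace, transpose_mul, transpose_transpose, Matrix.mul_assoc, trace_mul_comm,
    ← Matrix.mul_assoc Wᵀ, hW, Matrix.one_mul, hW, trace_one, Fintype.card_fin]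

lemma frob_sq_mul_transpose_mul_le (hW : Wᵀ * W = 1) (M : Matrix (Fin m) (Fin n) ℝ) :
    frob (W * Wᵀ * M) ^ 2 ≤ r * spec M ^ 2 := by
  rw [← frob_sq_mul_transpose_of_orthonormal hW, ← mul_pow]
  exact pow_le_pow_left₀ (frob_nonneg _) (frob_mul_le_frob_mul_spec _ _) 2

lemma frob_sq_mul_mul_transpose_le (hW : Wᵀ * W = 1) (M : Matrix (Fin n) (Fin m) ℝ) :
    frob (M * (W * Wᵀ)) ^ 2 ≤ r * spec M ^ 2 := by
  rw [← frob_sq_mul_transpose_of_orthonormal hW, ← mul_pow, mul_comm]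
  exact pow_le_pow_left₀ (frob_nonneg _) (frob_mul_le_spec_mul_frob _ _) 2

end Orthonormal

section LowRank

variable {k : ℕ} {A Ak : Matrix (Fin m) (Fin n) ℝ} {P : Matrix (Fin m) (Fin m) ℝ}

lemma frob_sq_sub_proj_mul_mul_eq {V : Matrix (Fin n) (Fin n) ℝ} (hP : IsIdempotentElem P)
    (hPt : P.IsSymm) (hV : IsIdempotentElem V) (hVt : V.IsSymm) (hAkV : Ak = A * V)
    (Q : Matrix (Fin n) (Fin n) ℝ) :
    frob (A - P * Ak * Q) ^ 2 = frob ((1 - P) * Ak) ^ 2 + frob (A - Ak) ^ 2 +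
      2 * ((P * (A - Ak))ᵀ * (P * (Ak * (1 - Q)))).trace + frob (P * (Ak * (1 - Q))) ^ 2 := by
  have hleft : P * (A - P * Ak * Q) = P * (A - Ak) + P * (Ak * (1 - Q)) := by
    simp only [Matrix.mul_sub, Matrix.mul_one, ← Matrix.mul_assoc, hP.eq]
    abel
  have hright : (1 - P) * (A - P * Ak * Q) = (1 - P) * A := by
    simp only [Matrix.mul_sub, Matrix.sub_mul, Matrix.one_mul, ← Matrix.mul_assoc, hP.eq]
    abel
  have hrange : (1 - P) * A * V = (1 - P) * Ak := by rw [Matrix.mul_assoc, hAkV]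
  have hkernel : (1 - P) * A * (1 - V) = (1 - P) * (A - Ak) := by
    rw [Matrix.mul_sub, Matrix.mul_one, hrange, Matrix.mul_sub]
  rw [frob_sq_proj_mul_add_compl hP hPt, hleft, hright,
    frob_sq_mul_proj_add_compl hV hVt ((1 - P) * A), hrange, hkernel, frob_add_sq,
    frob_sq_proj_mul_add_compl hP hPt (A - Ak)]
  ring

variable {Uk : Matrix (Fin m) (Fin k) ℝ} {Vk : Matrix (Fin n) (Fin k) ℝ}

lemma frob_sq_sub_proj_mul_mul_le (hUk : Ukᵀ * Uk = 1) (hVk : Vkᵀ * Vk = 1)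
    (hAkU : Ak = Uk * Ukᵀ * A) (hAkV : Ak = A * (Vk * Vkᵀ)) (hP : IsIdempotentElem P)
    (hPt : P.IsSymm) (Q : Matrix (Fin n) (Fin n) ℝ) :
    frob (A - P * Ak * Q) ^ 2 ≤
      frob (A - Ak) ^ 2 + 2 * k * spec ((1 - P) * A) ^ 2 + 2 * k * spec (A * (1 - Q)) ^ 2 := by
  set U := Uk * Ukᵀ
  set V := Vk * Vkᵀ
  set E := A - Ak
  set G := Ak * (1 - Q)
  have hV : IsIdempotentElem V := isIdempotentElem_mul_transpose hVk
  have hUE : U * E = 0 := by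
    rw [Matrix.mul_sub, hAkU, ← Matrix.mul_assoc, (isIdempotentElem_mul_transpose hUk).eq,
      sub_self]
  have hUG : U * G = G := by
    rw [show G = U * A * (1 - Q) by rw [← hAkU], ← Matrix.mul_assoc, ← Matrix.mul_assoc,
      (isIdempotentElem_mul_transpose hUk).eq]
  have hX : frob ((1 - P) * Ak) ^ 2 ≤ k * spec ((1 - P) * A) ^ 2 := by
    rw [hAkV, ← Matrix.mul_assoc]
    exact frob_sq_mul_mul_transpose_le hVk _
  have hG : frob G ^ 2 ≤ k * spec (A * (1 - Q)) ^ 2 := by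
    rw [show G = U * (A * (1 - Q)) by rw [← Matrix.mul_assoc, ← hAkU]]
    exact frob_sq_mul_transpose_mul_le hUk _
  have hC : frob (U * ((1 - P) * E)) ^ 2 ≤ k * spec ((1 - P) * A) ^ 2 := by
    have hE : (1 - P) * E = (1 - P) * A * (1 - V) := by
      rw [Matrix.mul_sub ((1 - P) * A), Matrix.mul_one, Matrix.mul_assoc, ← hAkV, Matrix.mul_sub]
    rw [hE, ← Matrix.mul_assoc]
    exact (pow_le_pow_left₀ (frob_nonneg _)
      (frob_mul_one_sub_proj_le hV (isSymm_mul_transpose Vk) _) 2).trans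
      (frob_sq_mul_transpose_mul_le hUk _)
  have hPG : frob (P * G) ^ 2 ≤ frob G ^ 2 :=
    pow_le_pow_left₀ (frob_nonneg _) (frob_proj_mul_le hP hPt G) 2
  have htrace := trace_transpose_proj_mul_mul_le hP hPt (isSymm_mul_transpose Uk) hUE hUG
  rw [frob_sq_sub_proj_mul_mul_eq hP hPt hV (isSymm_mul_transpose Vk) hAkV Q]
  nlinarith [sq_nonneg (frob (U * ((1 - P) * E)) - frob G)]

end LowRank

theorem stmt_12_general {m n k : ℕ} (hk : 0 < k) (ε : ℝ)
    (A Ak : Matrix (Fin m) (Fin n) ℝ)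
    (Uk : Matrix (Fin m) (Fin k) ℝ) (Vk : Matrix (Fin n) (Fin k) ℝ)
    (hUk : Ukᵀ * Uk = 1) (hVk : Vkᵀ * Vk = 1)
    (hAkU : Ak = Uk * Ukᵀ * A) (hAkV : Ak = A * (Vk * Vkᵀ))
    (P : Matrix (Fin m) (Fin m) ℝ) (Q : Matrix (Fin n) (Fin n) ℝ)
    (hP : P * P = P ∧ Pᵀ = P)
    (hPSF : spec ((1 - P) * A) ^ 2 ≤ (ε / (k : ℝ)) * frob (A - Ak) ^ 2)
    (hQSF : spec (A * (1 - Q)) ^ 2 ≤ (ε / (k : ℝ)) * frob (A - Ak) ^ 2) :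
    frob (A - P * Ak * Q) ^ 2 ≤ (1 + 4 * ε) * frob (A - Ak) ^ 2 := by
  have hSF : ∀ s : ℝ, s ^ 2 ≤ ε / k * frob (A - Ak) ^ 2 → k * s ^ 2 ≤ ε * frob (A - Ak) ^ 2 := by
    intro s hs
    calc (k : ℝ) * s ^ 2 ≤ k * (ε / k * frob (A - Ak) ^ 2) := by gcongr
      _ = ε * frob (A - Ak) ^ 2 := by field_simp [hk.ne']
  linarith [frob_sq_sub_proj_mul_mul_le hUk hVk hAkU hAkV hP.1 hP.2 Q, hSF _ hPSF, hSF _ hQSF]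

theorem stmt_12 {m n k : ℕ} (hk : 0 < k) (ε : ℝ) (hε : 0 < ε)
    (A Ak : Matrix (Fin m) (Fin n) ℝ)
    (Uk : Matrix (Fin m) (Fin k) ℝ) (Vk : Matrix (Fin n) (Fin k) ℝ)
    (hUk : Ukᵀ * Uk = 1) (hVk : Vkᵀ * Vk = 1)
    (hAkU : Ak = Uk * Ukᵀ * A) (hAkV : Ak = A * (Vk * Vkᵀ))
    (hbest : ∀ B : Matrix (Fin m) (Fin n) ℝ, B.rank ≤ k → frob (A - Ak) ≤ frob (A - B))
    (P : Matrix (Fin m) (Fin m) ℝ) (Q : Matrix (Fin n) (Fin n) ℝ)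
    (hP : P * P = P ∧ Pᵀ = P) (hQ : Q * Q = Q ∧ Qᵀ = Q)
    (hPSF : spec ((1 - P) * A) ^ 2 ≤ (ε / (k : ℝ)) * frob (A - Ak) ^ 2)
    (hQSF : spec (A * (1 - Q)) ^ 2 ≤ (ε / (k : ℝ)) * frob (A - Ak) ^ 2) :
    frob (A - P * Ak * Q) ^ 2 ≤ (1 + 4 * ε) * frob (A - Ak) ^ 2 :=
  stmt_12_general hk ε A Ak Uk Vk hUk hVk hAkU hAkV P Q hP hPSF hQSF
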